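/- arXiv:1308.4945 — 2 statements merged into one kernel-verified Lean document; each statement's English description precedes it below -/
import Mathlib

section
/- For every n ≥ 1, L(n) ⊆ B(n); consequently ℓ(n) = |L(n)| is at most the n-th Fibonacci number F_n (with F_1 = F_2 = 1). -/
/-- `IsMacaulayRep a d j b` says that
`a = C(b d, d) + C(b (d-1), d-1) + ⋯ + C(b j, j)` with
`b d > b (d-1) > ⋯ > b j ≥ j ≥ 1`. -/
def IsMacaulayRep (a d j : ℕ) (b : ℕ → ℕ) : Prop :=
  1 ≤ j ∧ j ≤ d ∧ j ≤ b j ∧ (∀ i, j ≤ i → i < d → b i < b (i + 1)) ∧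
  a = ∑ i ∈ Finset.Icc j d, Nat.choose (b i) i

/-- Given the `d`-th Macaulay representation data `(j, b)` of a positive integer `a`,
this is `a^⟨d⟩ = C(b d + 1, d+1) + C(b (d-1) + 1, d) + ⋯ + C(b j + 1, j+1)`. -/
def macaulayBoundOf (d j : ℕ) (b : ℕ → ℕ) : ℕ :=
  ∑ i ∈ Finset.Icc j d, Nat.choose (b i + 1) (i + 1)

/-- An `h`-vector: a finite sequence `(h₀, h₁, …, h_s)` of positive integers with
`h₀ = 1` and `h_{t+1} ≤ h_t^⟨t⟩` for all `1 ≤ t ≤ s - 1` (Macaulay's condition (C)). -/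
def IsHVector (h : List ℕ) : Prop :=
  h ≠ [] ∧ (∀ x ∈ h, 0 < x) ∧ h.getD 0 0 = 1 ∧
  ∀ t : ℕ, 1 ≤ t → t + 1 < h.length →
    ∃ (j : ℕ) (b : ℕ → ℕ), IsMacaulayRep (h.getD t 0) t j b ∧
      h.getD (t + 1) 0 ≤ macaulayBoundOf t j b

/-- `L(n)`: the set of `h`-vectors whose entries sum to `n`. -/
def LSet (n : ℕ) : Set (List ℕ) := {h | IsHVector h ∧ h.sum = n}

/-- `L_k(n)`: the set of `h`-vectors in `L(n)` with `h₁ = k`. -/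
def LkSet (k n : ℕ) : Set (List ℕ) := {h | h ∈ LSet n ∧ h.getD 1 0 = k}

/-- `BSet n l` says that the integer vector `l` belongs to the recursively defined
family `B(n)`: `B(1) = {(1)}`, `B(2) = {(1,1)}`, and for `n ≥ 3`,
`B(n) = C(n) ∪ D(n)`. -/
inductive BSet : ℕ → List ℕ → Prop
  | base1 : BSet 1 [1]
  | base2 : BSet 2 [1, 1]
  | extC {n : ℕ} {l : List ℕ} : 2 ≤ n → BSet n l → BSet (n + 1) (l ++ [1])
  | extD {n : ℕ} {l : List ℕ} {t : ℕ} : 2 ≤ n → BSet n (l ++ [t]) →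
      (l.length = 1 ∨ 1 < l.getLastD 0) → BSet (n + 1) (l ++ [t + 1])

/-! Write an h-vector of sum `n + 1` as `l ++ [t]`. If `t = 1`, then `l` is an h-vector of
sum `n`; if `t ≥ 2`, then so is `l ++ [t - 1]`, and the side condition of the step `D` holds
for `l` because `1^⟨d⟩ = 1`: after an entry `1` in a position `≥ 1` every entry is `1`.
Induction on `n` gives `L(n) ⊆ B(n)`.

For the count, let `R(n) ⊆ B(n)` be the vectors to which the step `D(n + 1)` applies
(`raisableSet n`) and `E(n) ⊆ B(n)` those whose last entry exceeds `1` (`endsAboveOneSet n`).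
Unwinding the last step of the recursion gives
`|B(n+1)| ≤ |B(n)| + |R(n)|`, `|R(n+1)| ≤ |R(n)| + |E(n)|` and `|E(n+1)| ≤ |R(n)|`,
so `|B(n)| ≤ F_n`, `|R(n)| ≤ F_{n-1}` and `|E(n)| ≤ F_{n-2}` by induction. -/

theorem Set.encard_le_add_of_subset_image_union {α β γ : Type*} {s : Set α} {f : β → α}
    {g : γ → α} {t : Set β} {u : Set γ} (h : s ⊆ f '' t ∪ g '' u) :
    s.encard ≤ t.encard + u.encard :=
  calc s.encard ≤ (f '' t ∪ g '' u).encard := Set.encard_le_encard h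
    _ ≤ (f '' t).encard + (g '' u).encard := Set.encard_union_le _ _
    _ ≤ t.encard + u.encard := add_le_add (Set.encard_image_le _ _) (Set.encard_image_le _ _)

namespace IsMacaulayRep

variable {a d j : ℕ} {b : ℕ → ℕ}

theorem le_apply (hrep : IsMacaulayRep a d j b) {i : ℕ} (hji : j ≤ i) (hid : i ≤ d) :
    i ≤ b i := by
  obtain ⟨-, -, hbj, hmono, -⟩ := hrep
  induction i, hji using Nat.le_induction with
  | base => exact hbj
  | succ i hji ih => have := hmono i hji (by omega); have := ih (by omega); omega

theorem macaulayBoundOf_eq_one (hrep : IsMacaulayRep 1 d j b) : macaulayBoundOf d j b = 1 := by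
  have hterm : ∀ i ∈ Finset.Icc j d, 1 ≤ (b i).choose i := fun i hi =>
    Nat.choose_pos (hrep.le_apply (Finset.mem_Icc.1 hi).1 (Finset.mem_Icc.1 hi).2)
  obtain ⟨hj, hjd, -, -, hsum⟩ := id hrep
  have hcard := Finset.card_nsmul_le_sum _ _ _ hterm
  rw [← hsum, Nat.card_Icc, smul_eq_mul, mul_one] at hcard
  obtain rfl : j = d := by omega
  rw [Finset.Icc_self, Finset.sum_singleton] at hsum
  obtain hbj | hbj := (hrep.le_apply le_rfl le_rfl).eq_or_lt
  · rw [macaulayBoundOf, Finset.Icc_self, Finset.sum_singleton, ← hbj, Nat.choose_self]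
  · have := Nat.choose_le_choose j hbj
    rw [Nat.choose_succ_self_right] at this
    omega

end IsMacaulayRep

namespace IsHVector

theorem getD_succ_le_one {h : List ℕ} (hv : IsHVector h) {i : ℕ} (hi : 1 ≤ i)
    (hlen : i + 1 < h.length) (h1 : h.getD i 0 = 1) : h.getD (i + 1) 0 ≤ 1 := by
  obtain ⟨j, b, hrep, hbound⟩ := hv.2.2.2 i hi hlen
  rw [h1] at hrep
  exact hbound.trans_eq hrep.macaulayBoundOf_eq_one

variable {l : List ℕ} {t : ℕ}

theorem of_append_singleton (hv : IsHVector (l ++ [t])) (hl : l ≠ []) : IsHVector l := by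
  obtain ⟨-, hpos, hhead, hmac⟩ := hv
  have hlen : 0 < l.length := List.length_pos_iff.mpr hl
  refine ⟨hl, fun x hx => hpos x (List.mem_append_left _ hx), ?_, fun i hi hil => ?_⟩
  · rwa [List.getD_append _ _ _ _ hlen] at hhead
  · obtain ⟨j, b, hrep, hbound⟩ := hmac i hi (by simp; omega)
    rw [List.getD_append _ _ _ _ (by omega)] at hrep hbound
    exact ⟨j, b, hrep, hbound⟩

theorem lower_last (hv : IsHVector (l ++ [t])) (hl : l ≠ []) {s : ℕ} (hs : 0 < s)
    (hst : s ≤ t) : IsHVector (l ++ [s]) := by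
  obtain ⟨-, hpos, hhead, hmac⟩ := hv
  have hlen : 0 < l.length := List.length_pos_iff.mpr hl
  refine ⟨by simp, ?_, ?_, fun i hi hil => ?_⟩
  · simp only [List.mem_append, List.mem_singleton]
    rintro x (hx | rfl)
    exacts [hpos x (List.mem_append_left _ hx), hs]
  · rwa [List.getD_append _ _ _ _ hlen] at hhead ⊢
  · simp only [List.length_append, List.length_singleton] at hil
    obtain ⟨j, b, hrep, hbound⟩ := hmac i hi (by simp; omega)
    rw [List.getD_append _ _ _ _ (by omega)] at hrep ⊢
    refine ⟨j, b, hrep, le_trans ?_ hbound⟩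
    rcases Nat.lt_or_ge (i + 1) l.length with hlt | hge
    · rw [List.getD_append _ _ _ _ hlt, List.getD_append _ _ _ _ hlt]
    · rw [List.getD_append_right _ _ _ _ hge, List.getD_append_right _ _ _ _ hge,
        show i + 1 - l.length = 0 by omega]
      simpa using hst

theorem length_eq_one_or_one_lt_getLastD (hv : IsHVector (l ++ [t])) (ht : 1 < t) :
    l.length = 1 ∨ 1 < l.getLastD 0 := by
  obtain ⟨-, hpos, hhead, -⟩ := id hv
  rcases List.eq_nil_or_concat' l with rfl | ⟨l', u, rfl⟩
  · simp only [List.nil_append, List.getD_cons_zero] at hhead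
    omega
  by_contra! ⟨hlen, hlast⟩
  rw [List.length_append, List.length_singleton] at hlen
  rw [List.getLastD_concat] at hlast
  have hu : 0 < u := hpos u (by simp)
  have := hv.getD_succ_le_one (i := l'.length) (by omega) (by simp)
    (by rw [List.getD_append _ _ _ _ (by simp)]; simp; omega)
  rw [List.getD_append_right _ _ _ _ (by simp)] at this
  simp at this
  omega

end IsHVector

def incLast (l : List ℕ) : List ℕ := l.dropLast ++ [l.getLastD 0 + 1]

@[simp]
theorem incLast_append_singleton (l : List ℕ) (t : ℕ) : incLast (l ++ [t]) = l ++ [t + 1] := by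
  simp [incLast]

namespace BSet

theorem eq_singleton_of_one {l : List ℕ} (hb : BSet 1 l) : l = [1] := by
  generalize hn : 1 = n at hb
  cases hb <;> first | rfl | omega

theorem eq_of_two {l : List ℕ} (hb : BSet 2 l) : l = [1, 1] := by
  generalize hn : 2 = n at hb
  cases hb <;> first | rfl | omega

theorem of_mem_LSet {n : ℕ} {h : List ℕ} (hh : h ∈ LSet n) : BSet n h := by
  induction n generalizing h with
  | zero =>
    obtain ⟨⟨hne, hpos, -, -⟩, hsum⟩ := hh
    obtain ⟨x, hx⟩ := List.exists_mem_of_ne_nil h hne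
    exact absurd (List.sum_eq_zero_iff.1 hsum x hx) (hpos x hx).ne'
  | succ n ih =>
    obtain ⟨hv, hsum⟩ := hh
    obtain ⟨hne, hpos, hhead, -⟩ := id hv
    rcases List.eq_nil_or_concat' h with rfl | ⟨l, t, rfl⟩
    · exact absurd rfl hne
    rw [List.sum_append, List.sum_singleton] at hsum
    by_cases hl : l = []
    · subst hl
      obtain rfl : t = 1 := hhead
      obtain rfl : n = 0 := by simpa using hsum
      exact base1
    obtain rfl | ht := Nat.eq_or_lt_of_le (hpos t (by simp))
    · have hb : BSet n l := ih ⟨hv.of_append_singleton hl, by omega⟩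
      rcases n with _ | _ | n
      · nomatch hb
      · rw [hb.eq_singleton_of_one]
        exact base2
      · exact extC (by omega) hb
    · have hb : BSet n (l ++ [t - 1]) :=
        ih ⟨hv.lower_last hl (by omega) (by omega), by simp; omega⟩
      rcases n with _ | _ | n
      · nomatch hb
      · exact absurd (by simpa using congrArg List.length hb.eq_singleton_of_one) hl
      · rw [show t = t - 1 + 1 by omega]
        exact extD (by omega) hb (hv.length_eq_one_or_one_lt_getLastD ht)

theorem two_le_length {n : ℕ} {l : List ℕ} (hb : BSet n l) (hn : 2 ≤ n) : 2 ≤ l.length := by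
  induction hb with
  | base1 => omega
  | base2 => simp
  | extC h2 _ ih => simpa using (ih h2).trans (Nat.le_succ _)
  | extD h2 _ _ ih => simpa using ih h2


def raisableSet (n : ℕ) : Set (List ℕ) :=
  {l | BSet n l ∧ (l.dropLast.length = 1 ∨ 1 < l.dropLast.getLastD 0)}

def endsAboveOneSet (n : ℕ) : Set (List ℕ) := {l | BSet n l ∧ 1 < l.getLastD 0}

theorem setOf_succ_subset {n : ℕ} (hn : 1 ≤ n) :
    {l | BSet (n + 1) l} ⊆ (· ++ [1]) '' {l | BSet n l} ∪ incLast '' raisableSet n := by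
  intro m hm
  cases hm with
  | base1 => omega
  | base2 => exact Or.inl ⟨[1], base1, rfl⟩
  | extC _ hb => exact Or.inl ⟨_, hb, rfl⟩
  | extD _ hb hc => exact Or.inr ⟨_, ⟨hb, by rwa [List.dropLast_concat]⟩, by simp⟩

theorem raisableSet_succ_subset {n : ℕ} (hn : 2 ≤ n) :
    raisableSet (n + 1) ⊆ incLast '' raisableSet n ∪ (· ++ [1]) '' endsAboveOneSet n := by
  rintro m ⟨hm, hc⟩
  cases hm with
  | base1 => omega
  | base2 => omega
  | extC h2 hb =>
    rw [List.dropLast_concat] at hc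
    have := hb.two_le_length h2
    exact Or.inr ⟨_, ⟨hb, hc.resolve_left (by omega)⟩, rfl⟩
  | extD _ hb _ => exact Or.inl ⟨_, ⟨hb, by rwa [List.dropLast_concat]⟩, by simp⟩

theorem endsAboveOneSet_succ_subset (n : ℕ) :
    endsAboveOneSet (n + 1) ⊆ incLast '' raisableSet n := by
  rintro m ⟨hm, hlast⟩
  cases hm with
  | base1 => simp at hlast
  | base2 => simp at hlast
  | extC _ _ => simp at hlast
  | extD _ hb hc => exact ⟨_, ⟨hb, by rwa [List.dropLast_concat]⟩, by simp⟩

theorem encard_le_fib_add_two (m : ℕ) :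
    {l | BSet (m + 2) l}.encard ≤ Nat.fib (m + 2) ∧
      (raisableSet (m + 2)).encard ≤ Nat.fib (m + 1) ∧
      (endsAboveOneSet (m + 2)).encard ≤ Nat.fib m := by
  induction m with
  | zero =>
    have hB : {l | BSet 2 l} ⊆ {[1, 1]} := fun l hl => hl.eq_of_two
    refine ⟨?_, ?_, ?_⟩
    · simpa using Set.encard_le_encard hB
    · simpa using Set.encard_le_encard (Set.Subset.trans (fun l hl => hl.1) hB)
    · simp only [Nat.fib_zero, Nat.cast_zero, nonpos_iff_eq_zero, Set.encard_eq_zero]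
      refine Set.eq_empty_of_forall_notMem fun l ⟨hl, hlast⟩ => ?_
      simp [hl.eq_of_two] at hlast
  | succ m ih =>
    obtain ⟨hB, hR, hE⟩ := ih
    have hfib : ∀ k, (Nat.fib (k + 1) : ℕ∞) + Nat.fib k = Nat.fib (k + 2) := fun k => by
      rw [Nat.fib_add_two, add_comm, Nat.cast_add]
    refine ⟨?_, ?_, ?_⟩
    · exact (Set.encard_le_add_of_subset_image_union (setOf_succ_subset (by omega))).trans
        ((add_le_add hB hR).trans_eq (hfib _))
    · exact (Set.encard_le_add_of_subset_image_union (raisableSet_succ_subset (by omega))).trans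
        ((add_le_add hR hE).trans_eq (hfib _))
    · exact (Set.encard_le_encard (endsAboveOneSet_succ_subset _)).trans
        ((Set.encard_image_le _ _).trans hR)

theorem encard_setOf_le_fib (n : ℕ) : {l | BSet n l}.encard ≤ Nat.fib n := by
  match n with
  | 0 =>
    simp only [Nat.fib_zero, Nat.cast_zero, nonpos_iff_eq_zero, Set.encard_eq_zero]
    exact Set.eq_empty_of_forall_notMem fun l (hl : BSet 0 l) => nomatch hl
  | 1 =>
    have h1 : {l | BSet 1 l} ⊆ {[1]} := fun l hl => hl.eq_singleton_of_one
    simpa using Set.encard_le_encard h1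
  | m + 2 => exact (encard_le_fib_add_two m).1

end BSet

/-- For every `n ≥ 1`, `L(n) ⊆ B(n)`; in particular `ℓ(n) = |L(n)|` is at most the
`n`-th Fibonacci number. -/
theorem LSet_subset_BSet_and_le_fib :
    ∀ n : ℕ, 1 ≤ n →
      LSet n ⊆ {l : List ℕ | BSet n l} ∧ (LSet n).ncard ≤ Nat.fib n := by
  intro n _
  have hsub : LSet n ⊆ {l | BSet n l} := fun _ => BSet.of_mem_LSet
  exact ⟨hsub, (Set.encard_le_coe_iff_finite_ncard_le.1
    ((Set.encard_le_encard hsub).trans (BSet.encard_setOf_le_fib n))).2⟩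
end

section
/- For all n ≥ 1 and k ≥ 1, ℓ_k(n) ≤ ℓ_{k+1}(n+1). -/
/-!
Raising `h₁` from `k` to `k + 1` maps `L_k(n)` injectively into `L_{k+1}(n+1)`. Since
`k^⟨1⟩ = C(k + 1, 2)`, the only condition of Macaulay's (C) that involves `h₁` is
`h₂ ≤ C(h₁ + 1, 2)`, and it only becomes weaker when `h₁` grows.
-/

theorem LSet_finite (n : ℕ) : (LSet n).Finite := by
  refine (Set.finite_range (Composition.blocks : Composition n → List ℕ)).subset ?_
  rintro h ⟨⟨-, hpos, -⟩, hsum⟩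
  exact ⟨⟨h, hpos _, hsum⟩, rfl⟩

theorem isMacaulayRep_one {a : ℕ} (ha : 1 ≤ a) : IsMacaulayRep a 1 1 (fun _ => a) :=
  ⟨le_rfl, le_rfl, ha, fun _ _ _ => by omega, by simp⟩

theorem IsMacaulayRep.macaulayBoundOf_one {a j : ℕ} {b : ℕ → ℕ} (hrep : IsMacaulayRep a 1 j b) :
    macaulayBoundOf 1 j b = (a + 1).choose 2 := by
  obtain ⟨hj₁, hj, -, -, rfl⟩ := hrep
  obtain rfl : j = 1 := by omega
  simp [macaulayBoundOf]

theorem IsHVector.of_le_second {k k' : ℕ} {rest : List ℕ} (hh : IsHVector (1 :: k :: rest))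
    (hkk' : k ≤ k') : IsHVector (1 :: k' :: rest) := by
  obtain ⟨-, hpos, -, hC⟩ := hh
  have hk' : 1 ≤ k' := (hpos k (by simp)).trans_le hkk'
  refine ⟨List.cons_ne_nil _ _, ?_, rfl, ?_⟩
  · intro x hx
    rcases List.mem_cons.1 hx with rfl | hx
    · exact one_pos
    rcases List.mem_cons.1 hx with rfl | hx
    · exact hk'
    · exact hpos x (by simp [hx])
  · rintro (_ | _ | t) ht hlen
    · omega
    · obtain ⟨j, b, hrep, hle⟩ := hC 1 le_rfl hlen
      refine ⟨1, fun _ => k', isMacaulayRep_one hk', ?_⟩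
      rw [(isMacaulayRep_one hk').macaulayBoundOf_one]
      rw [hrep.macaulayBoundOf_one] at hle
      exact hle.trans (Nat.choose_le_choose 2 (by simpa using hkk'))
    · exact hC (t + 2) ht hlen

theorem eq_one_cons_cons_of_mem_LkSet {k n : ℕ} {h : List ℕ} (hk : 1 ≤ k) (hh : h ∈ LkSet k n) :
    ∃ rest, h = 1 :: k :: rest := by
  obtain ⟨⟨⟨-, -, h₀, -⟩, -⟩, h₁⟩ := hh
  match h, h₀, h₁ with
  | [_], _, h₁ => simp only [List.getD_cons_succ, List.getD_nil] at h₁; omega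
  | _ :: _ :: rest, h₀, h₁ => exact ⟨rest, by simp_all⟩

theorem one_cons_succ_mem_LkSet {k n : ℕ} {rest : List ℕ} (hh : 1 :: k :: rest ∈ LkSet k n) :
    1 :: (k + 1) :: rest ∈ LkSet (k + 1) (n + 1) := by
  obtain ⟨⟨hvec, hsum⟩, -⟩ := hh
  refine ⟨⟨hvec.of_le_second k.le_succ, ?_⟩, rfl⟩
  simp only [List.sum_cons] at hsum ⊢
  omega

/-- For all `n ≥ 1` and `k ≥ 1`, `ℓ_k(n) ≤ ℓ_{k+1}(n+1)`. -/
theorem card_Lk_mono :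
    ∀ n k : ℕ, 1 ≤ n → 1 ≤ k → (LkSet k n).ncard ≤ (LkSet (k + 1) (n + 1)).ncard := by
  intro n k _ hk
  have hfin : (LkSet (k + 1) (n + 1)).Finite := (LSet_finite (n + 1)).subset fun _ hh => hh.1
  refine Set.ncard_le_ncard_of_injOn (fun h => h.set 1 (k + 1)) ?_ ?_ hfin
  · intro h hh
    obtain ⟨rest, rfl⟩ := eq_one_cons_cons_of_mem_LkSet hk hh
    exact one_cons_succ_mem_LkSet hh
  · intro h hh h' hh' heq
    obtain ⟨rest, rfl⟩ := eq_one_cons_cons_of_mem_LkSet hk hh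
    obtain ⟨rest', rfl⟩ := eq_one_cons_cons_of_mem_LkSet hk hh'
    simpa using heq
end
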